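/- Let N ≥ 3 and 1 ≤ k ≤ N−2 be integers and set m = N−k. For every smooth function u : ℝ^N → ℝ with compact support contained in the open cylinder {(y,z) ∈ ℝ^m × ℝ^k : 0 < ‖y‖ < 1}, one has ∫_{ℝ^N} |∇u(x)|² dx ≥ ((N−k−2)/2)² ∫_{ℝ^N} ‖y‖^{−2} |u(x)|² dx + (1/4) ∫_{ℝ^N} ‖y‖^{−2} (log‖y‖)^{−2} |u(x)|² dx. -/

import Mathlib

open MeasureTheory

/-- The Euclidean norm of the first `m` coordinates of `x ∈ ℝ^N`, i.e. `‖y‖`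
where `x = (y,z)` with `y ∈ ℝ^m` and `z ∈ ℝ^{N-m}`. -/
noncomputable def rhoY (m : ℕ) {N : ℕ} (x : EuclideanSpace ℝ (Fin N)) : ℝ :=
  Real.sqrt (∑ i : Fin N, if (i : ℕ) < m then x i ^ 2 else 0)

open scoped Classical

noncomputable section HardyAux

variable {N : ℕ}

/-- sum of squares of first `m` coordinates -/
def Sfun (m : ℕ) (x : EuclideanSpace ℝ (Fin N)) : ℝ :=
  ∑ i : Fin N, if (i : ℕ) < m then x i ^ 2 else 0

lemma Sfun_nonneg (m : ℕ) (x : EuclideanSpace ℝ (Fin N)) : 0 ≤ Sfun m x :=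
  Finset.sum_nonneg fun i _ => by split <;> positivity

lemma continuous_Sfun (m : ℕ) : Continuous (Sfun m (N := N)) := by
  refine continuous_finset_sum _ fun i _ => ?_
  by_cases h : (i : ℕ) < m
  · simp only [h, if_true]; exact (EuclideanSpace.proj (𝕜 := ℝ) i).continuous.pow 2
  · simpa [h] using continuous_const

/-- derivative of `Sfun` -/
def dSfun (m : ℕ) (x : EuclideanSpace ℝ (Fin N)) : EuclideanSpace ℝ (Fin N) →L[ℝ] ℝ :=
  ∑ i : Fin N, if (i : ℕ) < m then (2 * x i) • (EuclideanSpace.proj (𝕜 := ℝ) i) else 0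

lemma hasFDerivAt_Sfun (m : ℕ) (x : EuclideanSpace ℝ (Fin N)) :
    HasFDerivAt (Sfun m) (dSfun m x) x := by
  have h : ∀ i : Fin N, HasFDerivAt (fun y : EuclideanSpace ℝ (Fin N) =>
      if (i : ℕ) < m then y i ^ 2 else 0)
      (if (i : ℕ) < m then (2 * x i) • (EuclideanSpace.proj (𝕜 := ℝ) i) else 0) x := by
    intro i
    by_cases h : (i : ℕ) < m
    · simp only [if_pos h]
      have hp : HasFDerivAt (fun y : EuclideanSpace ℝ (Fin N) => y i)
          (EuclideanSpace.proj (𝕜 := ℝ) i) x := (EuclideanSpace.proj (𝕜 := ℝ) i).hasFDerivAt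
      have := hp.mul hp
      refine (this.congr_fderiv ?_).congr_of_eventuallyEq (Filter.Eventually.of_forall fun y => ?_)
      · ext w; simp only [ContinuousLinearMap.add_apply, ContinuousLinearMap.smul_apply, smul_eq_mul]; ring
      · show y i ^ 2 = y i * y i; ring
    · simp only [if_neg h]; exact hasFDerivAt_const _ _
  exact HasFDerivAt.fun_sum (fun i _ => h i)

lemma dSfun_apply_single (m : ℕ) (x : EuclideanSpace ℝ (Fin N)) (i : Fin N) :
    dSfun m x (EuclideanSpace.single i 1) = if (i : ℕ) < m then 2 * x i else 0 := by
  rw [dSfun, ContinuousLinearMap.sum_apply]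
  rw [Finset.sum_eq_single i]
  · by_cases h : (i : ℕ) < m <;> simp [h, EuclideanSpace.single_apply]
  · intro j _ hj
    by_cases h : (j : ℕ) < m <;> simp [h, EuclideanSpace.single_apply]
    exact fun hji => absurd hji hj
  · simp

/-- the function `h(s) = -a/s + 1/(s log s)` -/
def hFun (a s : ℝ) : ℝ := -a * s⁻¹ + (s * Real.log s)⁻¹

/-- the derivative of `hFun a` -/
def HFun (a s : ℝ) : ℝ := a * (s ^ 2)⁻¹ - (Real.log s + 1) * ((s * Real.log s) ^ 2)⁻¹

lemma hasDerivAt_hFun (a : ℝ) {s : ℝ} (hs0 : 0 < s) (hs1 : s < 1) :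
    HasDerivAt (hFun a) (HFun a s) s := by
  have hlog : Real.log s ≠ 0 := ne_of_lt (Real.log_neg hs0 hs1)
  have hs : s ≠ 0 := ne_of_gt hs0
  have h1 : HasDerivAt (fun y : ℝ => -a * y⁻¹) (-a * (-(s ^ 2)⁻¹)) s :=
    (hasDerivAt_inv hs).const_mul (-a)
  have h2 : HasDerivAt (fun y : ℝ => y * Real.log y) (1 * Real.log s + s * s⁻¹) s :=
    (hasDerivAt_id s).mul (Real.hasDerivAt_log hs)
  have h3 := h2.inv (mul_ne_zero hs hlog)
  have h4 := h1.add h3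
  refine HasDerivAt.congr_deriv (f := hFun a) h4 ?_
  rw [HFun]
  field_simp
  ring

lemma continuousAt_hFun (a : ℝ) {s : ℝ} (hs0 : 0 < s) (hs1 : s < 1) :
    ContinuousAt (hFun a) s := (hasDerivAt_hFun a hs0 hs1).continuousAt

lemma continuousAt_HFun (a : ℝ) {s : ℝ} (hs0 : 0 < s) (hs1 : s < 1) :
    ContinuousAt (HFun a) s := by
  have hlog : Real.log s ≠ 0 := ne_of_lt (Real.log_neg hs0 hs1)
  have hs : s ≠ 0 := ne_of_gt hs0
  apply ContinuousAt.sub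
  · exact (continuousAt_const.mul ((continuousAt_id.pow 2).inv₀ (pow_ne_zero 2 hs)))
  · exact ((Real.continuousAt_log hs).add continuousAt_const).mul
      (((continuousAt_id.mul (Real.continuousAt_log hs)).pow 2).inv₀
        (pow_ne_zero 2 (mul_ne_zero hs hlog)))

lemma key_id (a : ℝ) {s : ℝ} (hs : s ≠ 0) (ht : Real.log s ≠ 0) :
    (2 * a + 2) * hFun a s + 2 * s * HFun a s + s * (hFun a s) ^ 2
      + a ^ 2 * s⁻¹ + (s * (Real.log s) ^ 2)⁻¹ = 0 := by
  rw [hFun, HFun]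
  field_simp
  ring

lemma sum_ite_one (m : ℕ) (hmN : m ≤ N) :
    (∑ i : Fin N, if (i : ℕ) < m then (1 : ℝ) else 0) = m := by
  rw [Fin.sum_univ_eq_sum_range (fun i => if i < m then (1 : ℝ) else 0) N]
  rw [← Finset.sum_filter]
  have : (Finset.range N).filter (· < m) = Finset.range m := by
    ext i; simp [Finset.mem_range]; omega
  simp [this]

/-- the open cylinder in terms of `Sfun` -/
def Ucyl (m : ℕ) : Set (EuclideanSpace ℝ (Fin N)) := {x | 0 < Sfun m x ∧ Sfun m x < 1}

lemma isOpen_Ucyl (m : ℕ) : IsOpen (Ucyl m (N := N)) := by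
  have : Ucyl m (N := N) = Sfun m ⁻¹' (Set.Ioo 0 1) := rfl
  rw [this]
  exact isOpen_Ioo.preimage (continuous_Sfun m)

lemma rho_mem_iff (m : ℕ) (x : EuclideanSpace ℝ (Fin N)) :
    (0 < rhoY m x ∧ rhoY m x < 1) ↔ x ∈ Ucyl m := by
  have h1 : rhoY m x = Real.sqrt (Sfun m x) := rfl
  constructor
  · rintro ⟨ha, hb⟩
    refine ⟨Real.sqrt_pos.mp (h1 ▸ ha), ?_⟩
    have := Real.sqrt_lt' one_pos |>.mp (h1 ▸ hb)
    simpa using this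
  · rintro ⟨ha, hb⟩
    refine ⟨h1 ▸ Real.sqrt_pos.mpr ha, ?_⟩
    rw [h1]
    rw [Real.sqrt_lt' one_pos]
    simpa using hb

/-- components of the vector field `u² F` -/
def Gfun (a : ℝ) (m : ℕ) (u : EuclideanSpace ℝ (Fin N) → ℝ) (i : Fin N)
    (x : EuclideanSpace ℝ (Fin N)) : ℝ :=
  if (i : ℕ) < m ∧ x ∈ Ucyl m then u x * u x * x i * hFun a (Sfun m x) else 0

/-- the full derivative of `Gfun` -/
def Lclm (a : ℝ) (m : ℕ) (u : EuclideanSpace ℝ (Fin N) → ℝ) (i : Fin N)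
    (x : EuclideanSpace ℝ (Fin N)) : EuclideanSpace ℝ (Fin N) →L[ℝ] ℝ :=
  if (i : ℕ) < m ∧ x ∈ Ucyl m then
    (2 * u x * x i * hFun a (Sfun m x)) • fderiv ℝ u x
      + (u x * u x * hFun a (Sfun m x)) • (EuclideanSpace.proj (𝕜 := ℝ) i)
      + (u x * u x * x i * HFun a (Sfun m x)) • dSfun m x
  else 0

/-- the directional derivative of `Gfun i` in direction `eᵢ` -/
def Dfun (a : ℝ) (m : ℕ) (u : EuclideanSpace ℝ (Fin N) → ℝ) (i : Fin N)
    (x : EuclideanSpace ℝ (Fin N)) : ℝ :=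
  if (i : ℕ) < m ∧ x ∈ Ucyl m then
    2 * u x * (fderiv ℝ u x (EuclideanSpace.single i 1)) * x i * hFun a (Sfun m x)
      + u x * u x * hFun a (Sfun m x)
      + 2 * (u x * u x) * (x i * x i) * HFun a (Sfun m x)
  else 0

variable {a : ℝ} {m : ℕ} {u : EuclideanSpace ℝ (Fin N) → ℝ}

lemma hasFDerivAt_Gfun (hu : ContDiff ℝ (⊤ : ℕ∞) u) (hsupp : tsupport u ⊆ Ucyl m)
    (i : Fin N) (x : EuclideanSpace ℝ (Fin N)) :
    HasFDerivAt (Gfun a m u i) (Lclm a m u i x) x := by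
  by_cases hx : x ∈ Ucyl m
  · by_cases hi : (i : ℕ) < m
    · have hs0 : 0 < Sfun m x := hx.1
      have hs1 : Sfun m x < 1 := hx.2
      have hd : HasFDerivAt u (fderiv ℝ u x) x :=
        (hu.differentiable (by simp) x).hasFDerivAt
      have hu2 := hd.mul hd
      have hxi : HasFDerivAt (fun y : EuclideanSpace ℝ (Fin N) => y i)
          (EuclideanSpace.proj (𝕜 := ℝ) i) x := (EuclideanSpace.proj (𝕜 := ℝ) i).hasFDerivAt
      have hhS : HasFDerivAt (fun y => hFun a (Sfun m y))
          (HFun a (Sfun m x) • dSfun m x) x :=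
        (hasDerivAt_hFun a hs0 hs1).comp_hasFDerivAt x (hasFDerivAt_Sfun m x)
      have big := (hu2.mul hxi).mul hhS
      have heq : Gfun a m u i =ᶠ[nhds x]
          (fun y => u y * u y * y i * hFun a (Sfun m y)) := by
        filter_upwards [(isOpen_Ucyl m).mem_nhds hx] with y hy
        rw [Gfun, if_pos ⟨hi, hy⟩]
      refine (big.congr_of_eventuallyEq heq).congr_fderiv ?_
      rw [Lclm, if_pos ⟨hi, hx⟩]
      apply ContinuousLinearMap.ext
      intro w
      simp only [ContinuousLinearMap.add_apply, ContinuousLinearMap.smul_apply, smul_eq_mul,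
        Pi.mul_apply]
      ring
    · have hG : Gfun a m u i = fun _ => 0 := funext fun y => if_neg (by tauto)
      rw [show Lclm a m u i x = 0 from if_neg (by tauto), hG]
      exact hasFDerivAt_const _ _
  · have hxs : x ∉ tsupport u := fun hc => hx (hsupp hc)
    have heq : Gfun a m u i =ᶠ[nhds x] (fun _ => 0) := by
      filter_upwards [(isClosed_tsupport u).isOpen_compl.mem_nhds hxs] with y hy
      have huy : u y = 0 := image_eq_zero_of_notMem_tsupport hy
      simp [Gfun, huy]
    rw [show Lclm a m u i x = 0 from if_neg (by tauto)]
    exact (hasFDerivAt_const 0 x).congr_of_eventuallyEq heq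

lemma fderiv_Gfun_single (hu : ContDiff ℝ (⊤ : ℕ∞) u) (hsupp : tsupport u ⊆ Ucyl m)
    (i : Fin N) (x : EuclideanSpace ℝ (Fin N)) :
    fderiv ℝ (Gfun a m u i) x (EuclideanSpace.single i 1) = Dfun a m u i x := by
  rw [(hasFDerivAt_Gfun hu hsupp i x).fderiv]
  rw [Lclm, Dfun]
  by_cases hc : (i : ℕ) < m ∧ x ∈ Ucyl m
  · rw [if_pos hc, if_pos hc]
    simp only [ContinuousLinearMap.add_apply, ContinuousLinearMap.smul_apply, smul_eq_mul,
      dSfun_apply_single, if_pos hc.1]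
    have : (EuclideanSpace.proj (𝕜 := ℝ) i) (EuclideanSpace.single i (1 : ℝ)) = 1 := by
      simp [EuclideanSpace.single_apply]
    rw [this]
    ring
  · rw [if_neg hc, if_neg hc]; simp

lemma norm_gradient_sq (f : EuclideanSpace ℝ (Fin N) → ℝ) (x : EuclideanSpace ℝ (Fin N)) :
    ‖gradient f x‖ ^ 2 = ∑ i : Fin N, (fderiv ℝ f x (EuclideanSpace.single i 1)) ^ 2 := by
  have hv : ∀ i : Fin N, gradient f x i = fderiv ℝ f x (EuclideanSpace.single i 1) := by
    intro i
    have h1 : (inner ℝ (gradient f x) (EuclideanSpace.single i (1 : ℝ)) : ℝ)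
        = fderiv ℝ f x (EuclideanSpace.single i 1) := by
      rw [gradient]
      exact InnerProductSpace.toDual_symm_apply
    rw [← h1, EuclideanSpace.inner_single_right]
    simp
  rw [← Real.sq_sqrt (Finset.sum_nonneg fun i _ => sq_nonneg
    (fderiv ℝ f x (EuclideanSpace.single i 1)))]
  congr 1
  rw [EuclideanSpace.norm_eq]
  congr 1
  refine Finset.sum_congr rfl fun i _ => ?_
  rw [hv i, Real.norm_eq_abs, sq_abs]

lemma continuous_of_glue (hcs : HasCompactSupport u) (hsupp : tsupport u ⊆ Ucyl m)
    (f : EuclideanSpace ℝ (Fin N) → ℝ) (h0 : ∀ y, u y = 0 → f y = 0)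
    (hU : ∀ x ∈ Ucyl m, ContinuousAt f x) : Continuous f := by
  rw [continuous_iff_continuousAt]
  intro x
  by_cases hx : x ∈ Ucyl m
  · exact hU x hx
  · have hxs : x ∉ tsupport u := fun hc => hx (hsupp hc)
    have heq : f =ᶠ[nhds x] (fun _ => 0) := by
      filter_upwards [(isClosed_tsupport u).isOpen_compl.mem_nhds hxs] with y hy
      exact h0 y (image_eq_zero_of_notMem_tsupport hy)
    exact heq.continuousAt

lemma integrable_of_glue (hcs : HasCompactSupport u) (hsupp : tsupport u ⊆ Ucyl m)
    (f : EuclideanSpace ℝ (Fin N) → ℝ) (h0 : ∀ y, u y = 0 → f y = 0)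
    (hU : ∀ x ∈ Ucyl m, ContinuousAt f x) : Integrable f := by
  refine (continuous_of_glue hcs hsupp f h0 hU).integrable_of_hasCompactSupport ?_
  refine hcs.mono fun x hx => ?_
  intro hux
  exact hx (h0 x hux)

lemma continuousAt_fderiv_apply (hu : ContDiff ℝ (⊤ : ℕ∞) u) (i : Fin N) :
    Continuous fun x => fderiv ℝ u x (EuclideanSpace.single i 1) :=
  (hu.continuous_fderiv (by simp)).clm_apply continuous_const

lemma integrable_Dfun (hu : ContDiff ℝ (⊤ : ℕ∞) u) (hcs : HasCompactSupport u)
    (hsupp : tsupport u ⊆ Ucyl m) (i : Fin N) :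
    Integrable (Dfun a m u i) := by
  refine integrable_of_glue hcs hsupp _ (fun y hy => by simp [Dfun, hy]) (fun x hx => ?_)
  by_cases hi : (i : ℕ) < m
  · have heq : Dfun a m u i =ᶠ[nhds x] (fun y =>
        2 * u y * (fderiv ℝ u y (EuclideanSpace.single i 1)) * y i * hFun a (Sfun m y)
          + u y * u y * hFun a (Sfun m y)
          + 2 * (u y * u y) * (y i * y i) * HFun a (Sfun m y)) := by
      filter_upwards [(isOpen_Ucyl m).mem_nhds hx] with y hy
      rw [Dfun, if_pos ⟨hi, hy⟩]
    refine ContinuousAt.congr ?_ heq.symm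
    have hcu := hu.continuous.continuousAt (x := x)
    have hcf := (continuousAt_fderiv_apply hu i).continuousAt (x := x)
    have hcxi : ContinuousAt (fun y : EuclideanSpace ℝ (Fin N) => y i) x :=
      (EuclideanSpace.proj (𝕜 := ℝ) i).continuous.continuousAt
    have hch : ContinuousAt (fun y => hFun a (Sfun m y)) x :=
      (continuousAt_hFun a hx.1 hx.2).comp ((continuous_Sfun m).continuousAt)
    have hcH : ContinuousAt (fun y => HFun a (Sfun m y)) x :=
      (continuousAt_HFun a hx.1 hx.2).comp ((continuous_Sfun m).continuousAt)
    exact (((((continuousAt_const.mul hcu).mul hcf).mul hcxi).mul hch).add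
      ((hcu.mul hcu).mul hch)).add
        (((continuousAt_const.mul (hcu.mul hcu)).mul (hcxi.mul hcxi)).mul hcH)
  · have : Dfun a m u i = fun _ => 0 := funext fun y => if_neg (by tauto)
    rw [this]; exact continuousAt_const

lemma integral_Dfun (hu : ContDiff ℝ (⊤ : ℕ∞) u) (hcs : HasCompactSupport u)
    (hsupp : tsupport u ⊆ Ucyl m) (i : Fin N) :
    ∫ x, Dfun a m u i x = 0 := by
  have hGdiff : Differentiable ℝ (Gfun a m u i) :=
    fun x => (hasFDerivAt_Gfun hu hsupp i x).differentiableAt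
  have hGint : Integrable (Gfun a m u i) := by
    refine (hGdiff.continuous).integrable_of_hasCompactSupport ?_
    refine hcs.mono fun x hx hux => hx ?_
    simp [Gfun, hux]
  have h1 : Integrable (fun x =>
      fderiv ℝ (fun _ : EuclideanSpace ℝ (Fin N) => (1:ℝ)) x (EuclideanSpace.single i 1)
        * Gfun a m u i x) := by
    have : (fun x => fderiv ℝ (fun _ : EuclideanSpace ℝ (Fin N) => (1:ℝ)) x
        (EuclideanSpace.single i 1) * Gfun a m u i x) = fun _ => 0 := by
      funext x; simp [fderiv_fun_const]
    rw [this]; exact integrable_zero _ _ _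
  have h2 : Integrable (fun x => (1:ℝ) * fderiv ℝ (Gfun a m u i) x
      (EuclideanSpace.single i 1)) := by
    simp only [one_mul]
    have : (fun x => fderiv ℝ (Gfun a m u i) x (EuclideanSpace.single i 1))
        = Dfun a m u i := funext fun x => fderiv_Gfun_single hu hsupp i x
    rw [this]
    exact integrable_Dfun hu hcs hsupp i
  have h3 : Integrable (fun x => (1:ℝ) * Gfun a m u i x) := by
    simpa using hGint
  have := integral_mul_fderiv_eq_neg_fderiv_mul_of_integrable (μ := volume)
    h1 h2 h3 (fun x _ => differentiableAt_const (1:ℝ)) (fun x _ => hGdiff x)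
  simp only [one_mul, fderiv_fun_const] at this
  simp only [fderiv_Gfun_single hu hsupp i] at this
  simpa using this

lemma pointwise_ineq (hu : ContDiff ℝ (⊤ : ℕ∞) u) (hsupp : tsupport u ⊆ Ucyl m)
    (hmN : m ≤ N) (hma : (m : ℝ) = 2 * a + 2) (x : EuclideanSpace ℝ (Fin N)) :
    (∑ i : Fin N, Dfun a m u i x)
      + (a ^ 2 * (u x * u x / Sfun m x)
          + u x * u x / (Sfun m x * (Real.log (Sfun m x)) ^ 2))
      ≤ ‖gradient u x‖ ^ 2 := by
  by_cases hxs : x ∈ tsupport u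
  · have hx : x ∈ Ucyl m := hsupp hxs
    have hs0 : 0 < Sfun m x := hx.1
    have hs1 : Sfun m x < 1 := hx.2
    have hs : Sfun m x ≠ 0 := ne_of_gt hs0
    have ht : Real.log (Sfun m x) ≠ 0 := ne_of_lt (Real.log_neg hs0 hs1)
    set s := Sfun m x with hsdef
    set v := u x with hvdef
    set p : Fin N → ℝ := fun i => fderiv ℝ u x (EuclideanSpace.single i 1) with hpdef
    set q : Fin N → ℝ := fun i => if (i : ℕ) < m then v * x i * hFun a s else 0 with hqdef
    rw [norm_gradient_sq u x]
    have E0 : ∑ i : Fin N, Dfun a m u i x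
        = 2 * v * hFun a s * (∑ i : Fin N, if (i : ℕ) < m then p i * x i else 0)
          + v * v * hFun a s * (m : ℝ) + 2 * v * v * HFun a s * s := by
      have step : ∀ i : Fin N, Dfun a m u i x
          = 2 * v * hFun a s * (if (i : ℕ) < m then p i * x i else 0)
            + v * v * hFun a s * (if (i : ℕ) < m then (1:ℝ) else 0)
            + 2 * v * v * HFun a s * (if (i : ℕ) < m then x i ^ 2 else 0) := by
        intro i
        rw [Dfun]
        by_cases hi : (i : ℕ) < m
        · rw [if_pos ⟨hi, hx⟩]; simp only [if_pos hi]; ring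
        · rw [if_neg (by tauto)]; simp only [if_neg hi]; ring
      rw [Finset.sum_congr rfl fun i _ => step i]
      rw [Finset.sum_add_distrib, Finset.sum_add_distrib, ← Finset.mul_sum, ← Finset.mul_sum,
        ← Finset.mul_sum, sum_ite_one m hmN]
      have : (∑ i : Fin N, if (i : ℕ) < m then x i ^ 2 else 0) = s := rfl
      rw [this]
    have e2 : ∑ i : Fin N, (p i - q i) ^ 2
        = (∑ i : Fin N, p i ^ 2)
          - 2 * v * hFun a s * (∑ i : Fin N, if (i : ℕ) < m then p i * x i else 0)
          + (v * hFun a s) ^ 2 * s := by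
      have step : ∀ i : Fin N, (p i - q i) ^ 2
          = p i ^ 2 - 2 * v * hFun a s * (if (i : ℕ) < m then p i * x i else 0)
            + (v * hFun a s) ^ 2 * (if (i : ℕ) < m then x i ^ 2 else 0) := by
        intro i
        by_cases hi : (i : ℕ) < m <;> simp only [hqdef, if_pos, if_neg, hi, if_true, if_false] <;>
          ring
      rw [Finset.sum_congr rfl fun i _ => step i]
      rw [Finset.sum_add_distrib, Finset.sum_sub_distrib, ← Finset.mul_sum, ← Finset.mul_sum]
      have : (∑ i : Fin N, if (i : ℕ) < m then x i ^ 2 else 0) = s := rfl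
      rw [this]
    have hQ : 0 ≤ ∑ i : Fin N, (p i - q i) ^ 2 :=
      Finset.sum_nonneg fun i _ => sq_nonneg _
    have E1 : ∑ i : Fin N, (p i - q i) ^ 2
        = (∑ i : Fin N, p i ^ 2)
          - ((∑ i : Fin N, Dfun a m u i x)
            + (a ^ 2 * (v * v / s) + v * v / (s * (Real.log s) ^ 2))) := by
      rw [e2, E0]
      linear_combination (v * v) * key_id a hs ht + (v * v * hFun a s) * hma
    linarith [E1, hQ]
  · have huz : u x = 0 := image_eq_zero_of_notMem_tsupport hxs
    have hD : ∀ i : Fin N, Dfun a m u i x = 0 := fun i => by simp [Dfun, huz]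
    rw [Finset.sum_eq_zero fun i _ => hD i]
    simp [huz]
    all_goals positivity

end HardyAux

/-- Improved cylindrical Hardy inequality with logarithmic remainder, for smooth
functions compactly supported in the cylinder `{0 < ‖y‖ < 1}`:
`∫ |∇u|² ≥ ((N-k-2)/2)² ∫ ‖y‖⁻²|u|² + (1/4) ∫ ‖y‖⁻²(log ‖y‖)⁻²|u|²`. -/
theorem improved_cylindrical_hardy (N k m : ℕ) (hN : 3 ≤ N) (hk1 : 1 ≤ k)
    (hk2 : k ≤ N - 2) (hm : m = N - k)
    (u : EuclideanSpace ℝ (Fin N) → ℝ) (hu : ContDiff ℝ (⊤ : ℕ∞) u)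
    (hcs : HasCompactSupport u)
    (hsupp : tsupport u ⊆ {x : EuclideanSpace ℝ (Fin N) | 0 < rhoY m x ∧ rhoY m x < 1}) :
    ∫ x, ‖gradient u x‖ ^ 2 ≥
      (((N : ℝ) - k - 2) / 2) ^ 2 * (∫ x, (u x) ^ 2 / (rhoY m x) ^ 2)
        + (1 / 4) * ∫ x, (u x) ^ 2 / ((rhoY m x) ^ 2 * (Real.log (rhoY m x)) ^ 2) := by
  classical
  set a : ℝ := ((N : ℝ) - k - 2) / 2 with ha
  have hkN : k ≤ N := by omega
  have hmN : m ≤ N := by omega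
  have hma : (m : ℝ) = 2 * a + 2 := by
    rw [hm, Nat.cast_sub hkN, ha]
    have h2N : (2 : ℕ) ≤ N := by omega
    have : ((N - 2 : ℕ) : ℝ) = (N : ℝ) - 2 := by rw [Nat.cast_sub h2N]; norm_num
    ring
  have hsupp' : tsupport u ⊆ Ucyl m := fun x hx => (rho_mem_iff m x).mp (hsupp hx)
  have intW1 : Integrable (fun x => u x * u x / Sfun m x) := by
    refine integrable_of_glue hcs hsupp' _ (fun y hy => by simp [hy]) (fun x hx => ?_)
    exact ((hu.continuous.continuousAt).mul (hu.continuous.continuousAt)).div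
      ((continuous_Sfun m).continuousAt) (ne_of_gt hx.1)
  have intW2 : Integrable
      (fun x => u x * u x / (Sfun m x * (Real.log (Sfun m x)) ^ 2)) := by
    refine integrable_of_glue hcs hsupp' _ (fun y hy => by simp [hy]) (fun x hx => ?_)
    have hlog : Real.log (Sfun m x) ≠ 0 := ne_of_lt (Real.log_neg hx.1 hx.2)
    refine ((hu.continuous.continuousAt).mul (hu.continuous.continuousAt)).div
      (((continuous_Sfun m).continuousAt).mul
        (((Real.continuousAt_log (ne_of_gt hx.1)).comp
          ((continuous_Sfun m).continuousAt)).pow 2))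
      (mul_ne_zero (ne_of_gt hx.1) (pow_ne_zero 2 hlog))
  have intD : ∀ i : Fin N, Integrable (Dfun a m u i) :=
    fun i => integrable_Dfun hu hcs hsupp' i
  have intDsum : Integrable (fun x => ∑ i : Fin N, Dfun a m u i x) :=
    integrable_finset_sum _ (fun i _ => intD i)
  have grad_cont : Continuous (fun x => ‖gradient u x‖ ^ 2) := by
    have hg : Continuous (fun x => gradient u x) :=
      (InnerProductSpace.toDual ℝ (EuclideanSpace ℝ (Fin N))).symm.continuous.comp
        (hu.continuous_fderiv (by simp))
    exact (hg.norm).pow 2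
  have grad_supp : Function.support (fun x => ‖gradient u x‖ ^ 2) ⊆ tsupport u := by
    intro x hx
    by_contra hxs
    apply hx
    have heq : u =ᶠ[nhds x] (fun _ => (0:ℝ)) := by
      filter_upwards [(isClosed_tsupport u).isOpen_compl.mem_nhds hxs] with y hy
      exact image_eq_zero_of_notMem_tsupport hy
    have hf0 : fderiv ℝ u x = 0 := by
      rw [heq.fderiv_eq]; exact fderiv_const_apply 0
    simp [gradient, hf0]
  have int_grad : Integrable (fun x => ‖gradient u x‖ ^ 2) :=
    grad_cont.integrable_of_hasCompactSupport (hcs.mono' grad_supp)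
  have hDint0 : ∫ x, (∑ i : Fin N, Dfun a m u i x) = 0 := by
    rw [integral_finset_sum _ (fun i _ => intD i)]
    simp [integral_Dfun hu hcs hsupp']
  have hptw : ∀ x, a ^ 2 * (u x * u x / Sfun m x)
      + u x * u x / (Sfun m x * (Real.log (Sfun m x)) ^ 2)
      ≤ ‖gradient u x‖ ^ 2 - ∑ i : Fin N, Dfun a m u i x := by
    intro x
    have := pointwise_ineq hu hsupp' hmN hma x
    linarith
  have hmono : ∫ x, (a ^ 2 * (u x * u x / Sfun m x)
        + u x * u x / (Sfun m x * (Real.log (Sfun m x)) ^ 2))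
      ≤ ∫ x, (‖gradient u x‖ ^ 2 - ∑ i : Fin N, Dfun a m u i x) :=
    integral_mono ((intW1.const_mul _).add intW2) (int_grad.sub intDsum) hptw
  rw [integral_sub int_grad intDsum, hDint0, sub_zero] at hmono
  rw [integral_add (intW1.const_mul _) intW2, integral_const_mul] at hmono
  have eqA : ∀ x, u x ^ 2 / (rhoY m x) ^ 2 = u x * u x / Sfun m x := by
    intro x
    rw [show (rhoY m x) ^ 2 = Sfun m x from Real.sq_sqrt (Sfun_nonneg m x), sq]
  have eqB : ∀ x, u x ^ 2 / ((rhoY m x) ^ 2 * (Real.log (rhoY m x)) ^ 2)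
      = 4 * (u x * u x / (Sfun m x * (Real.log (Sfun m x)) ^ 2)) := by
    intro x
    have h1 : (rhoY m x) ^ 2 = Sfun m x := Real.sq_sqrt (Sfun_nonneg m x)
    have h2 : Real.log (rhoY m x) = Real.log (Sfun m x) / 2 := by
      rw [show rhoY m x = Real.sqrt (Sfun m x) from rfl, Real.log_sqrt (Sfun_nonneg m x)]
    rw [h1, h2]
    rw [show Sfun m x * (Real.log (Sfun m x) / 2) ^ 2
        = Sfun m x * (Real.log (Sfun m x)) ^ 2 / 4 from by ring]
    rw [div_div_eq_mul_div]
    ring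
  have hI1 : (∫ x, u x ^ 2 / (rhoY m x) ^ 2) = ∫ x, u x * u x / Sfun m x :=
    integral_congr_ae (Filter.Eventually.of_forall eqA)
  have hI2 : (∫ x, u x ^ 2 / ((rhoY m x) ^ 2 * (Real.log (rhoY m x)) ^ 2))
      = 4 * ∫ x, u x * u x / (Sfun m x * (Real.log (Sfun m x)) ^ 2) := by
    rw [integral_congr_ae (Filter.Eventually.of_forall eqB)]
    exact integral_const_mul 4 _
  rw [ge_iff_le, hI1, hI2]
  linarith
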